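/- arXiv:2501.13221 — 2 statements merged into one kernel-verified Lean document; each statement's English description precedes it below -/
import Mathlib

section
/- Let S be a finite subset of ℤ^ℓ spanning ℝ^ℓ, and let f(a) = Σ_{v∈S} f_v a₁^{v₁}⋯a_ℓ^{v_ℓ} be a Laurent polynomial with all coefficients f_v > 0. If f has a critical point in ℝ_{>0}^ℓ, then for any c₁,…,c_ℓ ∈ ℤ_{≥0} and d₁,…,d_ℓ ∈ ℝ, the integral ∫_{ℝ_{>0}^ℓ} e^{-f(a)} a₁^{d₁}⋯a_ℓ^{d_ℓ} |log a₁|^{c₁}⋯|log a_ℓ|^{c_ℓ} da₁⋯da_ℓ is finite. -/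
/-!
At a critical point `a₀` the weights `w_v = f_v a₀^v > 0` balance, `∑ w_v v = 0`; since `S` spans,
`0` is then an interior point of the convex hull of `S`. Hence for each coordinate direction `±e_k`
some `ε e_k` is a convex combination `∑ p_v v`, and weighted AM-GM gives
`exp(± ε log a_k) = ∏ (a^v)^{p_v} ≤ ∑ p_v a^v ≤ K f(a)`. So `f(a) ≥ ∑_k δ_k exp(ε_k |log a_k|)`, and
the integrand is dominated by a product of one-variable functions
`exp(-δ exp(ε |log t|)) t^d |log t|^c`, which decay faster than any power of `t` at `0` and `∞`.
-/

open MeasureTheory Set Real Filter Topology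

theorem mul_sub_mul_exp_le {δ ε y : ℝ} (M : ℝ) (hδ : 0 < δ) (hε : 0 < ε) (hy : 0 ≤ y) :
    M * y - δ * exp (ε * y) ≤ M ^ 2 / (δ * ε ^ 2) := by
  have hquad : (ε * y) ^ 2 / 2 ≤ exp (ε * y) := by
    nlinarith [quadratic_le_exp_of_nonneg (mul_nonneg hε.le hy), mul_nonneg hε.le hy]
  rw [le_div_iff₀ (by positivity)]
  nlinarith [mul_le_mul_of_nonneg_left hquad (by positivity : 0 ≤ δ ^ 2 * ε ^ 2),
    sq_nonneg (δ * ε ^ 2 * y - M)]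

theorem pow_mul_exp_sub_le {δ ε y : ℝ} (c : ℕ) (B : ℝ) (hδ : 0 < δ) (hε : 0 < ε) (hy : 0 ≤ y) :
    y ^ c * exp (B * y - δ * exp (ε * y)) ≤ c.factorial * exp ((B + 1) ^ 2 / (δ * ε ^ 2)) := by
  have hpow : y ^ c ≤ c.factorial * exp y := by
    have := pow_div_factorial_le_exp y hy c
    rwa [div_le_iff₀ (by positivity), mul_comm] at this
  calc y ^ c * exp (B * y - δ * exp (ε * y))
      ≤ c.factorial * exp y * exp (B * y - δ * exp (ε * y)) := by gcongr
    _ = c.factorial * exp ((B + 1) * y - δ * exp (ε * y)) := by rw [mul_assoc, ← exp_add]; ring_nf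
    _ ≤ c.factorial * exp ((B + 1) ^ 2 / (δ * ε ^ 2)) := by
      gcongr; exact mul_sub_mul_exp_le _ hδ hε hy

theorem exp_neg_two_mul_abs_log_le {t : ℝ} (ht : 0 < t) :
    exp (-(2 * |log t|)) ≤ 2 * (1 + t ^ 2)⁻¹ := by
  have h1 : 1 ≤ exp (2 * |log t|) := one_le_exp (by positivity)
  have h2 : t ^ 2 ≤ exp (2 * |log t|) := by
    calc t ^ 2 = exp (2 * log t) := by rw [mul_comm, exp_mul, exp_log ht, rpow_two]
      _ ≤ exp (2 * |log t|) := by gcongr; exact le_abs_self _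
  rw [exp_neg, ← div_eq_mul_inv, inv_le_comm₀ (exp_pos _) (by positivity), inv_div]
  rw [div_le_iff₀ two_pos]; linarith

theorem integrableOn_exp_neg_mul_exp_abs_log {δ ε : ℝ} (hδ : 0 < δ) (hε : 0 < ε) (d : ℝ) (c : ℕ) :
    IntegrableOn (fun t => exp (-(δ * exp (ε * |log t|))) * (t ^ d * |log t| ^ c)) (Ioi 0) := by
  set C := c.factorial * exp ((|d| + 2 + 1) ^ 2 / (δ * ε ^ 2))
  refine (integrable_inv_one_add_sq.const_mul (2 * C)).integrableOn.mono'
    (by fun_prop : Measurable _).aestronglyMeasurable ?_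
  filter_upwards [ae_restrict_mem measurableSet_Ioi] with t (ht : 0 < t)
  set y := |log t|
  have hy : 0 ≤ y := abs_nonneg _
  have hrpow : t ^ d ≤ exp (|d| * y) := by
    rw [rpow_def_of_pos ht, mul_comm]
    refine exp_le_exp.2 ?_
    calc d * log t ≤ |d * log t| := le_abs_self _
      _ = |d| * y := abs_mul _ _
  rw [norm_of_nonneg (by positivity)]
  calc exp (-(δ * exp (ε * y))) * (t ^ d * y ^ c)
      ≤ exp (-(δ * exp (ε * y))) * (exp (|d| * y) * y ^ c) := by gcongr
    _ = y ^ c * exp ((|d| + 2) * y - δ * exp (ε * y)) * exp (-(2 * y)) := by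
      rw [mul_assoc, ← exp_add, show (|d| + 2) * y - δ * exp (ε * y) + -(2 * y)
        = -(δ * exp (ε * y)) + |d| * y by ring, exp_add]
      ring
    _ ≤ C * (2 * (1 + t ^ 2)⁻¹) := by
      gcongr
      · exact pow_mul_exp_sub_le c _ hδ hε hy
      · exact exp_neg_two_mul_abs_log_le ht
    _ = 2 * C * (1 + t ^ 2)⁻¹ := by ring

theorem exists_pos_smul_eq_convex_combination {α E : Type*} [AddCommGroup E] [Module ℝ E]
    [Nontrivial E] {S : Finset α} {φ : α → E} (hspan : Submodule.span ℝ (φ '' S) = ⊤)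
    {w : α → ℝ} (hw : ∀ v ∈ S, 0 < w v) (hbal : ∑ v ∈ S, w v • φ v = 0) (u : E) :
    ∃ ε > (0 : ℝ), ∃ p : α → ℝ, (∀ v ∈ S, 0 < p v) ∧ ∑ v ∈ S, p v = 1 ∧
      ∑ v ∈ S, p v • φ v = ε • u := by
  obtain ⟨μ, hμ⟩ : ∃ μ : α → ℝ, ∑ v ∈ S, μ v • φ v = u := by
    obtain ⟨l, hl, rfl⟩ := Finsupp.mem_span_image_iff_linearCombination ℝ |>.1
      (hspan ▸ Submodule.mem_top : u ∈ Submodule.span ℝ (φ '' S))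
    refine ⟨l, ?_⟩
    rw [Finsupp.linearCombination_apply]
    exact (l.sum_of_support_subset (Finset.coe_subset.1 ((Finsupp.mem_supported ℝ l).1 hl))
      (fun v a => a • φ v) fun _ _ => zero_smul ℝ _).symm
  have hS : S.Nonempty := by
    rw [Finset.nonempty_iff_ne_empty]
    rintro rfl
    simp at hspan
  obtain ⟨t, ht, hpos⟩ : ∃ t > 0, ∀ v ∈ S, 0 < w v + t * μ v := by
    have hnear : ∀ᶠ t in 𝓝 (0 : ℝ), ∀ v ∈ S, 0 < w v + t * μ v :=
      (eventually_all_finset S).2 fun v hv =>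
        ((by fun_prop : Continuous fun t : ℝ => w v + t * μ v).tendsto 0).eventually_const_lt
          (by simpa using hw v hv)
    exact ((hnear.filter_mono nhdsWithin_le_nhds).and (self_mem_nhdsWithin (s := Ioi 0))).exists.imp
      fun t h => ⟨h.2, h.1⟩
  set T := ∑ v ∈ S, (w v + t * μ v)
  have hT : 0 < T := Finset.sum_pos hpos hS
  refine ⟨t / T, div_pos ht hT, fun v => (w v + t * μ v) / T, fun v hv => div_pos (hpos v hv) hT,
    by rw [← Finset.sum_div, div_self hT.ne'], ?_⟩
  calc ∑ v ∈ S, ((w v + t * μ v) / T) • φ v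
      = T⁻¹ • (∑ v ∈ S, w v • φ v + t • ∑ v ∈ S, μ v • φ v) := by
        simp only [Finset.smul_sum, ← Finset.sum_add_distrib, smul_smul, ← add_smul]
        congr! 2 with v; ring
    _ = (t / T) • u := by rw [hbal, hμ, zero_add, smul_smul, inv_mul_eq_div]

section Laurent

variable {ι : Type*} [Fintype ι] {S : Finset (ι → ℤ)} {fc : (ι → ℤ) → ℝ}

noncomputable def laurentFun (S : Finset (ι → ℤ)) (fc : (ι → ℤ) → ℝ) (a : ι → ℝ) : ℝ :=
  ∑ v ∈ S, fc v * ∏ i, a i ^ v i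

theorem prod_zpow_eq_exp_dotProduct_log {a : ι → ℝ} (ha : ∀ i, 0 < a i) (v : ι → ℤ) :
    ∏ i, a i ^ v i = exp ((fun i => (v i : ℝ)) ⬝ᵥ fun i => log (a i)) := by
  rw [dotProduct, exp_sum]
  refine Finset.prod_congr rfl fun i _ => ?_
  rw [← rpow_intCast, rpow_def_of_pos (ha i), mul_comm]

theorem laurentFun_nonneg (hfc : ∀ v ∈ S, 0 < fc v) {a : ι → ℝ} (ha : ∀ i, 0 < a i) :
    0 ≤ laurentFun S fc a :=
  Finset.sum_nonneg fun v hv =>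
    mul_nonneg (hfc v hv).le (Finset.prod_nonneg fun i _ => (zpow_pos (ha i) _).le)

theorem sum_smul_eq_zero_of_fderiv_laurentFun_eq_zero {a₀ : ι → ℝ} (ha₀ : ∀ i, 0 < a₀ i)
    (hcrit : fderiv ℝ (laurentFun S fc) a₀ = 0) :
    ∑ v ∈ S, (fc v * ∏ i, a₀ i ^ v i) • (fun i => (v i : ℝ)) = 0 := by
  classical
  have hf : HasFDerivAt (laurentFun S fc) (0 : (ι → ℝ) →L[ℝ] ℝ) a₀ := by
    rw [← hcrit]
    refine DifferentiableAt.hasFDerivAt ?_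
    unfold laurentFun
    fun_prop (disch := exact Or.inl (ha₀ _).ne')
  ext k
  set γ : ℝ → ι → ℝ := fun s i => a₀ i * exp (s * (Pi.single k 1 : ι → ℝ) i)
  have hγ : laurentFun S fc ∘ γ = fun s => ∑ v ∈ S, (fc v * ∏ i, a₀ i ^ v i) * exp (s * v k) := by
    ext s
    refine Finset.sum_congr rfl fun v _ => ?_
    have hγpos : ∀ i, 0 < γ s i := fun i => mul_pos (ha₀ i) (exp_pos _)
    rw [prod_zpow_eq_exp_dotProduct_log hγpos, prod_zpow_eq_exp_dotProduct_log ha₀, mul_assoc,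
      ← exp_add]
    congr 2
    simp [γ, log_mul (ha₀ _).ne' (exp_pos _).ne', dotProduct, mul_add, Finset.sum_add_distrib,
      Pi.single_apply, mul_comm]
  have h0 : HasDerivAt (laurentFun S fc ∘ γ) 0 0 := by
    have hγ0 : γ 0 = a₀ := by simp [γ]
    simpa using
      (hγ0 ▸ hf).comp_hasDerivAt (0 : ℝ) ((by fun_prop : Differentiable ℝ γ) 0).hasDerivAt
  have h1 : HasDerivAt (laurentFun S fc ∘ γ) (∑ v ∈ S, (fc v * ∏ i, a₀ i ^ v i) * v k) 0 := by
    rw [hγ]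
    refine HasDerivAt.fun_sum fun v _ => ?_
    simpa using
      (((hasDerivAt_id (0 : ℝ)).mul_const (v k : ℝ)).exp).const_mul (fc v * ∏ i, a₀ i ^ v i)
  simpa using h1.unique h0

theorem exp_sum_smul_dotProduct_log_le (hfc : ∀ v ∈ S, 0 < fc v) {p : (ι → ℤ) → ℝ}
    (hp : ∀ v ∈ S, 0 ≤ p v) (hp1 : ∑ v ∈ S, p v = 1) {a : ι → ℝ} (ha : ∀ i, 0 < a i) :
    exp ((∑ v ∈ S, p v • fun i => (v i : ℝ)) ⬝ᵥ fun i => log (a i)) ≤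
      (∑ v ∈ S, p v / fc v) * laurentFun S fc a := by
  have hmono : ∀ v : ι → ℤ, 0 ≤ ∏ i, a i ^ v i := fun v =>
    Finset.prod_nonneg fun i _ => (zpow_pos (ha i) _).le
  calc exp ((∑ v ∈ S, p v • fun i => (v i : ℝ)) ⬝ᵥ fun i => log (a i))
      = ∏ v ∈ S, (∏ i, a i ^ v i) ^ p v := by
        rw [sum_dotProduct, exp_sum]
        refine Finset.prod_congr rfl fun v _ => ?_
        rw [smul_dotProduct, smul_eq_mul, prod_zpow_eq_exp_dotProduct_log ha, ← exp_mul, mul_comm]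
    _ ≤ ∑ v ∈ S, p v * ∏ i, a i ^ v i :=
        geom_mean_le_arith_mean_weighted S p _ hp hp1 fun v _ => hmono v
    _ ≤ ∑ v ∈ S, p v / fc v * laurentFun S fc a := by
        refine Finset.sum_le_sum fun v hv => ?_
        have hterm : fc v * ∏ i, a i ^ v i ≤ laurentFun S fc a :=
          Finset.single_le_sum (f := fun v => fc v * ∏ i, a i ^ v i)
            (fun v hv => mul_nonneg (hfc v hv).le (hmono v)) hv
        calc p v * ∏ i, a i ^ v i = p v / fc v * (fc v * ∏ i, a i ^ v i) := by
              field_simp [(hfc v hv).ne']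
          _ ≤ p v / fc v * laurentFun S fc a := by
              gcongr
              exact div_nonneg (hp v hv) (hfc v hv).le
    _ = (∑ v ∈ S, p v / fc v) * laurentFun S fc a := (Finset.sum_mul ..).symm

theorem exists_exp_dotProduct_log_le_laurentFun [Nonempty ι]
    (hspan : Submodule.span ℝ ((fun (v : ι → ℤ) (i : ι) => (v i : ℝ)) '' (S : Set (ι → ℤ))) = ⊤)
    (hfc : ∀ v ∈ S, 0 < fc v) {a₀ : ι → ℝ} (ha₀ : ∀ i, 0 < a₀ i)
    (hcrit : fderiv ℝ (laurentFun S fc) a₀ = 0) (u : ι → ℝ) :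
    ∃ ε > (0 : ℝ), ∃ K > (0 : ℝ), ∀ a : ι → ℝ, (∀ i, 0 < a i) →
      exp (ε * (u ⬝ᵥ fun i => log (a i))) ≤ K * laurentFun S fc a := by
  obtain ⟨ε, hε, p, hp, hp1, hpu⟩ := exists_pos_smul_eq_convex_combination hspan
    (fun v hv => mul_pos (hfc v hv) (Finset.prod_pos fun i _ => zpow_pos (ha₀ i) _))
    (sum_smul_eq_zero_of_fderiv_laurentFun_eq_zero ha₀ hcrit) u
  have hS : S.Nonempty := Finset.nonempty_of_sum_ne_zero (hp1 ▸ one_ne_zero)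
  refine ⟨ε, hε, ∑ v ∈ S, p v / fc v,
    Finset.sum_pos (fun v hv => div_pos (hp v hv) (hfc v hv)) hS, fun a ha => ?_⟩
  rw [← smul_eq_mul, ← smul_dotProduct, ← hpu]
  exact exp_sum_smul_dotProduct_log_le hfc (fun v hv => (hp v hv).le) hp1 ha

theorem exp_min_mul_abs_le_add (ε₁ ε₂ x : ℝ) :
    exp (min ε₁ ε₂ * |x|) ≤ exp (ε₁ * x) + exp (ε₂ * -x) := by
  rcases le_total 0 x with hx | hx
  · calc exp (min ε₁ ε₂ * |x|) ≤ exp (ε₁ * x) := by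
          rw [abs_of_nonneg hx]; gcongr; exact min_le_left _ _
      _ ≤ exp (ε₁ * x) + exp (ε₂ * -x) := le_add_of_nonneg_right (exp_pos _).le
  · calc exp (min ε₁ ε₂ * |x|) ≤ exp (ε₂ * -x) := by
          rw [abs_of_nonpos hx]; gcongr
          · linarith
          · exact min_le_right _ _
      _ ≤ exp (ε₁ * x) + exp (ε₂ * -x) := le_add_of_nonneg_left (exp_pos _).le

theorem exists_mul_exp_abs_log_le_laurentFun
    (hspan : Submodule.span ℝ ((fun (v : ι → ℤ) (i : ι) => (v i : ℝ)) '' (S : Set (ι → ℤ))) = ⊤)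
    (hfc : ∀ v ∈ S, 0 < fc v) {a₀ : ι → ℝ} (ha₀ : ∀ i, 0 < a₀ i)
    (hcrit : fderiv ℝ (laurentFun S fc) a₀ = 0) (k : ι) :
    ∃ ε > (0 : ℝ), ∃ δ > (0 : ℝ), ∀ a : ι → ℝ, (∀ i, 0 < a i) →
      δ * exp (ε * |log (a k)|) ≤ laurentFun S fc a := by
  classical
  have : Nonempty ι := ⟨k⟩
  obtain ⟨ε₁, hε₁, K₁, hK₁, h₁⟩ :=
    exists_exp_dotProduct_log_le_laurentFun hspan hfc ha₀ hcrit (Pi.single k 1)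
  obtain ⟨ε₂, hε₂, K₂, hK₂, h₂⟩ :=
    exists_exp_dotProduct_log_le_laurentFun hspan hfc ha₀ hcrit (Pi.single k (-1))
  refine ⟨min ε₁ ε₂, lt_min hε₁ hε₂, (K₁ + K₂)⁻¹, by positivity, fun a ha => ?_⟩
  have e₁ := h₁ a ha
  have e₂ := h₂ a ha
  simp only [single_dotProduct, one_mul, neg_one_mul] at e₁ e₂
  rw [inv_mul_le_iff₀ (by positivity)]
  calc exp (min ε₁ ε₂ * |log (a k)|) ≤ exp (ε₁ * log (a k)) + exp (ε₂ * -log (a k)) :=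
        exp_min_mul_abs_le_add _ _ _
    _ ≤ K₁ * laurentFun S fc a + K₂ * laurentFun S fc a := add_le_add e₁ e₂
    _ = (K₁ + K₂) * laurentFun S fc a := by ring

theorem exists_sum_mul_exp_abs_log_le_laurentFun
    (hspan : Submodule.span ℝ ((fun (v : ι → ℤ) (i : ι) => (v i : ℝ)) '' (S : Set (ι → ℤ))) = ⊤)
    (hfc : ∀ v ∈ S, 0 < fc v) {a₀ : ι → ℝ} (ha₀ : ∀ i, 0 < a₀ i)
    (hcrit : fderiv ℝ (laurentFun S fc) a₀ = 0) :
    ∃ ε δ : ι → ℝ, (∀ k, 0 < ε k) ∧ (∀ k, 0 < δ k) ∧ ∀ a : ι → ℝ, (∀ i, 0 < a i) →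
      ∑ k, δ k * exp (ε k * |log (a k)|) ≤ laurentFun S fc a := by
  choose ε hε δ hδ h using exists_mul_exp_abs_log_le_laurentFun hspan hfc ha₀ hcrit
  set n : ℝ := (Fintype.card ι : ℝ)
  refine ⟨ε, fun k => δ k / n, hε,
    fun k => div_pos (hδ k) (Nat.cast_pos.2 (Fintype.card_pos_iff.2 ⟨k⟩)), fun a ha => ?_⟩
  calc ∑ k, δ k / n * exp (ε k * |log (a k)|) ≤ ∑ _k : ι, laurentFun S fc a / n :=
        Finset.sum_le_sum fun k _ => by
          rw [div_mul_eq_mul_div]; gcongr; exact h k a ha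
    _ = laurentFun S fc a * (n / n) := by
        rw [Finset.sum_const, Finset.card_univ, nsmul_eq_mul]; ring
    _ ≤ laurentFun S fc a := mul_le_of_le_one_right (laurentFun_nonneg hfc ha) (div_self_le_one n)

end Laurent

/-- Lemma C (convexhull): if a Laurent polynomial `f(a) = Σ_{v ∈ S} f_v a^v` with positive
coefficients, whose exponent set `S ⊂ ℤ^ℓ` spans `ℝ^ℓ`, has a critical point in the positive
orthant, then `∫_{ℝ_{>0}^ℓ} e^{-f(a)} ∏ a_i^{d_i} |log a_i|^{c_i} da < ∞`. -/
theorem integrable_exp_neg_laurent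
    (ℓ : ℕ) (S : Finset (Fin ℓ → ℤ))
    (hspan : Submodule.span ℝ ((fun (v : Fin ℓ → ℤ) (i : Fin ℓ) => (v i : ℝ)) '' (S : Set (Fin ℓ → ℤ))) = ⊤)
    (fc : (Fin ℓ → ℤ) → ℝ) (hfc : ∀ v ∈ S, 0 < fc v)
    (a₀ : Fin ℓ → ℝ) (ha₀ : ∀ i, 0 < a₀ i)
    (hcrit : fderiv ℝ (fun a : Fin ℓ → ℝ => ∑ v ∈ S, fc v * ∏ i, a i ^ v i) a₀ = 0)
    (c : Fin ℓ → ℕ) (d : Fin ℓ → ℝ) :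
    IntegrableOn
      (fun a : Fin ℓ → ℝ =>
        Real.exp (-(∑ v ∈ S, fc v * ∏ i, a i ^ v i)) *
          ∏ i, (a i ^ d i * |Real.log (a i)| ^ c i))
      {a : Fin ℓ → ℝ | ∀ i, 0 < a i} := by
  obtain ⟨ε, δ, hε, hδ, hf⟩ := exists_sum_mul_exp_abs_log_le_laurentFun hspan hfc ha₀ hcrit
  have horth : {a : Fin ℓ → ℝ | ∀ i, 0 < a i} = univ.pi fun _ => Ioi 0 := by ext; simp
  have hdom : IntegrableOn (fun a : Fin ℓ → ℝ => ∏ k,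
      exp (-(δ k * exp (ε k * |log (a k)|))) * (a k ^ d k * |log (a k)| ^ c k))
      {a | ∀ i, 0 < a i} := by
    rw [horth, IntegrableOn, volume_pi, Measure.restrict_pi_pi]
    exact Integrable.fintype_prod fun k =>
      integrableOn_exp_neg_mul_exp_abs_log (hδ k) (hε k) (d k) (c k)
  refine hdom.mono' (by fun_prop : Measurable _).aestronglyMeasurable ?_
  filter_upwards [ae_restrict_mem (horth ▸ MeasurableSet.univ_pi fun _ => measurableSet_Ioi)]
    with a ha
  have hweight : 0 ≤ ∏ i, (a i ^ d i * |log (a i)| ^ c i) :=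
    Finset.prod_nonneg fun i _ => by have := ha i; positivity
  rw [norm_of_nonneg (mul_nonneg (exp_pos _).le hweight),
    Finset.prod_mul_distrib (f := fun k => exp (-(δ k * exp (ε k * |log (a k)|)))), ← exp_sum,
    Finset.sum_neg_distrib]
  gcongr
  exact hf a ha
end

section
/- Let g(x) = Σ_{v∈S} f_v e^{⟨x,v⟩} with S ⊂ ℤ^ℓ finite and all f_v > 0, and suppose 0 lies in the interior of the convex hull of S. Then there exist ε > 0 and M ∈ ℝ such that g(x) ≥ M + Σ_k (ε x_k² + (d_k+1) x_k) for all x ∈ ℝ^ℓ, for any fixed reals d₁,…,d_ℓ. -/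
/-- cube lower bound for exp on nonneg reals -/
lemma exp_cube_aux {u : ℝ} (hu : 0 ≤ u) : u ^ 3 / 27 ≤ Real.exp u := by
  have h1 : Real.exp u = (Real.exp (u / 3)) ^ 3 := by
    rw [← Real.exp_nat_mul]
    norm_num
    ring
  have h2 : u / 3 ≤ Real.exp (u / 3) := (Real.add_one_le_exp (u / 3)).trans'
    (by linarith)
  have h3 : (u / 3) ^ 3 ≤ (Real.exp (u / 3)) ^ 3 :=
    pow_le_pow_left₀ (by positivity) h2 3
  calc u ^ 3 / 27 = (u / 3) ^ 3 := by ring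
    _ ≤ _ := h3.trans_eq h1.symm

set_option maxHeartbeats 1000000 in
/-- If `g(x) = Σ_{v ∈ S} f_v e^{⟨x,v⟩}` with positive coefficients and `0` lies in the interior
of the convex hull of `S`, then for any fixed reals `d₁,…,d_ℓ` there exist `ε > 0` and `M ∈ ℝ`
such that `g(x) ≥ M + Σ_k (ε x_k² + (d_k+1) x_k)` for all `x`. -/
theorem exp_sum_ge_quadratic
    (ℓ : ℕ) (S : Finset (Fin ℓ → ℤ))
    (fc : (Fin ℓ → ℤ) → ℝ) (hfc : ∀ v ∈ S, 0 < fc v)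
    (h0 : (0 : Fin ℓ → ℝ) ∈ interior (convexHull ℝ
      ((fun (v : Fin ℓ → ℤ) (i : Fin ℓ) => (v i : ℝ)) '' (S : Set (Fin ℓ → ℤ)))))
    (d : Fin ℓ → ℝ) :
    ∃ ε > (0 : ℝ), ∃ M : ℝ, ∀ x : Fin ℓ → ℝ,
      M + ∑ k, (ε * (x k) ^ 2 + (d k + 1) * x k) ≤
        ∑ v ∈ S, fc v * Real.exp (∑ i, x i * (v i : ℝ)) := by
  classical
  set T : Set (Fin ℓ → ℝ) :=
    ((fun (v : Fin ℓ → ℤ) (i : Fin ℓ) => (v i : ℝ)) '' (S : Set (Fin ℓ → ℤ))) with hTdef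
  -- S is nonempty
  have hSne : S.Nonempty := by
    have hTne : T.Nonempty := by
      by_contra h
      rw [Set.not_nonempty_iff_eq_empty] at h
      rw [h] at h0
      simp at h0
    obtain ⟨y, hy⟩ := hTne
    obtain ⟨v, hv, -⟩ := hy
    exact ⟨v, hv⟩
  -- radius r with ball ⊆ convexHull
  obtain ⟨r, hr, hball⟩ := Metric.isOpen_iff.mp isOpen_interior 0 h0
  -- minimum coefficient
  set c : ℝ := S.inf' hSne fc with hcdef
  have hc : 0 < c := by
    rw [hcdef, Finset.lt_inf'_iff]
    exact hfc
  -- key directional bound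
  have key : ∀ x : Fin ℓ → ℝ, ∃ v ∈ S, r / 2 * ‖x‖ ≤ ∑ i, x i * (v i : ℝ) := by
    intro x
    rcases eq_or_ne x 0 with hx | hx
    · obtain ⟨v, hv⟩ := hSne
      exact ⟨v, hv, by simp [hx]⟩
    · have hxn : 0 < ‖x‖ := norm_pos_iff.mpr hx
      set p : Fin ℓ → ℝ := (r / (2 * ‖x‖)) • x with hpdef
      have hpmem : p ∈ convexHull ℝ T := by
        apply interior_subset
        apply hball
        simp only [Metric.mem_ball, dist_zero_right, hpdef, norm_smul]
        rw [Real.norm_eq_abs, abs_of_pos (by positivity)]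
        rw [div_mul_eq_mul_div, mul_comm (2:ℝ) ‖x‖, ← div_div,
          mul_div_assoc, div_self hxn.ne', mul_one]
        linarith
      have hlin : ConvexOn ℝ Set.univ (fun y : Fin ℓ → ℝ => ∑ i, x i * y i) := by
        refine ⟨convex_univ, fun u _ v _ a b _ _ hab => le_of_eq ?_⟩
        simp only [Pi.add_apply, Pi.smul_apply, smul_eq_mul]
        rw [Finset.mul_sum, Finset.mul_sum, ← Finset.sum_add_distrib]
        exact Finset.sum_congr rfl fun i _ => by ring
      obtain ⟨y, hy, hle⟩ := hlin.exists_ge_of_mem_convexHull (Set.subset_univ T) hpmem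
      obtain ⟨v, hvS, rfl⟩ := hy
      refine ⟨v, hvS, le_trans ?_ hle⟩
      -- ∑ i, x i * p i = (r/(2‖x‖)) * ∑ x i ^ 2 ≥ (r/2) ‖x‖
      have hsq : ‖x‖ ^ 2 ≤ ∑ i, x i ^ 2 := by
        have hnn : (0:ℝ) ≤ Real.sqrt (∑ i, x i ^ 2) := Real.sqrt_nonneg _
        have hle' : ‖x‖ ≤ Real.sqrt (∑ i, x i ^ 2) := by
          refine (pi_norm_le_iff_of_nonneg hnn).mpr fun i => ?_
          rw [Real.norm_eq_abs, ← Real.sqrt_sq_eq_abs]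
          exact Real.sqrt_le_sqrt (Finset.single_le_sum
            (fun j _ => sq_nonneg (x j)) (Finset.mem_univ i))
        calc ‖x‖ ^ 2 ≤ Real.sqrt (∑ i, x i ^ 2) ^ 2 :=
              pow_le_pow_left₀ (norm_nonneg x) hle' 2
          _ = ∑ i, x i ^ 2 := Real.sq_sqrt (by positivity)
      have : ∑ i, x i * p i = (r / (2 * ‖x‖)) * ∑ i, x i ^ 2 := by
        rw [Finset.mul_sum]
        exact Finset.sum_congr rfl fun i _ => by
          simp [hpdef, Pi.smul_apply, smul_eq_mul]; ring
      rw [this]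
      have h1 : r / 2 * ‖x‖ = (r / (2 * ‖x‖)) * ‖x‖ ^ 2 := by
        field_simp
      rw [h1]
      exact mul_le_mul_of_nonneg_left hsq (by positivity)
  -- constants
  set D : ℝ := ∑ k, |d k + 1| with hDdef
  have hD : 0 ≤ D := Finset.sum_nonneg fun k _ => abs_nonneg _
  set c'' : ℝ := c * (r / 2) ^ 3 / 27 with hc''def
  have hc'' : 0 < c'' := by positivity
  set A : ℝ := (ℓ : ℝ) + D with hAdef
  have hA : 0 ≤ A := by positivity
  set T0 : ℝ := max 1 (A / c'') with hT0def
  have hT01 : (1:ℝ) ≤ T0 := le_max_left _ _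
  refine ⟨1, one_pos, -(A * T0 ^ 2), fun x => ?_⟩
  obtain ⟨v, hvS, hv⟩ := key x
  set t : ℝ := ‖x‖ with htdef
  have ht : 0 ≤ t := norm_nonneg x
  -- bound the quadratic part
  have hquad : ∑ k, ((1:ℝ) * (x k) ^ 2 + (d k + 1) * x k) ≤ (ℓ:ℝ) * t ^ 2 + D * t := by
    have : ∀ k : Fin ℓ, (1:ℝ) * (x k) ^ 2 + (d k + 1) * x k ≤ t ^ 2 + |d k + 1| * t := by
      intro k
      have hk : |x k| ≤ t := by
        simpa [Real.norm_eq_abs] using norm_le_pi_norm x k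
      have h1 : (x k) ^ 2 ≤ t ^ 2 := by
        rw [← sq_abs]
        exact pow_le_pow_left₀ (abs_nonneg _) hk 2
      have h2 : (d k + 1) * x k ≤ |d k + 1| * t := by
        calc (d k + 1) * x k ≤ |(d k + 1) * x k| := le_abs_self _
          _ = |d k + 1| * |x k| := abs_mul _ _
          _ ≤ |d k + 1| * t := mul_le_mul_of_nonneg_left hk (abs_nonneg _)
      linarith
    calc ∑ k, ((1:ℝ) * (x k) ^ 2 + (d k + 1) * x k)
        ≤ ∑ k : Fin ℓ, (t ^ 2 + |d k + 1| * t) :=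
          Finset.sum_le_sum fun k _ => this k
      _ = (ℓ:ℝ) * t ^ 2 + D * t := by
          rw [Finset.sum_add_distrib, Finset.sum_const, ← Finset.sum_mul]
          simp [hDdef, nsmul_eq_mul]
  -- the cubic bound on the exp side
  have hcube : c'' * t ^ 3 ≤ c * Real.exp (r / 2 * t) := by
    have := exp_cube_aux (u := r / 2 * t) (by positivity)
    have h2 : c * ((r / 2 * t) ^ 3 / 27) ≤ c * Real.exp (r / 2 * t) :=
      mul_le_mul_of_nonneg_left this hc.le
    calc c'' * t ^ 3 = c * ((r / 2 * t) ^ 3 / 27) := by rw [hc''def]; ring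
      _ ≤ _ := h2
  -- the elementary polynomial bound
  have hpoly : (ℓ:ℝ) * t ^ 2 + D * t ≤ c'' * t ^ 3 + A * T0 ^ 2 := by
    rcases le_or_gt t T0 with hcase | hcase
    · have h1 : (ℓ:ℝ) * t ^ 2 ≤ (ℓ:ℝ) * T0 ^ 2 :=
        mul_le_mul_of_nonneg_left (pow_le_pow_left₀ ht hcase 2) (Nat.cast_nonneg ℓ)
      have h2 : D * t ≤ D * T0 ^ 2 := by
        have : t ≤ T0 ^ 2 := hcase.trans (by nlinarith)
        exact mul_le_mul_of_nonneg_left this hD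
      have h3 : 0 ≤ c'' * t ^ 3 := by positivity
      rw [hAdef]; nlinarith
    · have ht1 : (1:ℝ) ≤ t := hT01.trans hcase.le
      have hAc : A / c'' ≤ t := (le_max_right _ _).trans (hT0def ▸ hcase.le)
      have hAt : A ≤ c'' * t := by
        rw [div_le_iff₀ hc''] at hAc
        linarith [hAc]
      have h1 : (ℓ:ℝ) * t ^ 2 + D * t ≤ A * t ^ 2 := by
        have htt : t ≤ t ^ 2 := by nlinarith
        have : D * t ≤ D * t ^ 2 := mul_le_mul_of_nonneg_left htt hD
        rw [hAdef]; nlinarith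
      have h2 : A * t ^ 2 ≤ c'' * t ^ 3 := by nlinarith
      have h3 : 0 ≤ A * T0 ^ 2 := by positivity
      linarith
  -- bound exp term by the single term for v
  have hsingle : c * Real.exp (r / 2 * t) ≤
      ∑ w ∈ S, fc w * Real.exp (∑ i, x i * (w i : ℝ)) := by
    have h1 : c * Real.exp (r / 2 * t) ≤ fc v * Real.exp (∑ i, x i * (v i : ℝ)) := by
      have hc1 : c ≤ fc v := Finset.inf'_le fc hvS
      have he : Real.exp (r / 2 * t) ≤ Real.exp (∑ i, x i * (v i : ℝ)) :=
        Real.exp_le_exp.mpr hv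
      calc c * Real.exp (r / 2 * t) ≤ fc v * Real.exp (r / 2 * t) :=
            mul_le_mul_of_nonneg_right hc1 (Real.exp_pos _).le
        _ ≤ fc v * Real.exp (∑ i, x i * (v i : ℝ)) :=
            mul_le_mul_of_nonneg_left he (hfc v hvS).le
    exact h1.trans (Finset.single_le_sum
      (f := fun w => fc w * Real.exp (∑ i, x i * (w i : ℝ)))
      (fun w hw => mul_nonneg (hfc w hw).le (Real.exp_pos _).le) hvS)
  linarith
end
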